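/- arXiv:math/0010172 — 2 statements merged into one kernel-verified Lean document; each statement's English description precedes it below -/
import Mathlib

section
/- For a skew-symmetric matrix F viewed as the even element ½⟨ρ, Fρ⟩ = ½ Σ_{a,b} ρₐ F_{ab} ρ_b in the Grassmann algebra Λ(ℝ^{2s+2}) (n = 2s+2 even), the Berezin integral ∫[Dρ] exp(½⟨ρ,Fρ⟩) equals the Pfaffian of F. -/
/-!
Expanding the `k`-th power of `Q = ∑ F a b • ρ a ρ b` gives a sum over words `c` of length `2k`
of `∏ᵢ F (c (2i)) (c (2i+1))` times `ρ (c 0) ⋯ ρ (c (2k-1))`. The Berezin integral kills every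
word of length `≠ 2s+2`: shorter ones lie in a lower exterior power, longer ones repeat a letter.
Among words of length `2s+2` only permutations `σ` survive, each contributing `sign σ` times the
integral of the top form. Hence only `k = s+1` contributes to `exp (Q/2)`, with the factor
`2^{-(s+1)}/(s+1)!` of the Pfaffian.
-/

open ExteriorAlgebra

noncomputable def pfaffian (s : ℕ) (F : Matrix (Fin (2 * s + 2)) (Fin (2 * s + 2)) ℝ) : ℝ :=
  (1 / (2 ^ (s + 1) * (Nat.factorial (s + 1) : ℝ))) *
    ∑ σ : Equiv.Perm (Fin (2 * s + 2)),
      ((Equiv.Perm.sign σ : ℤ) : ℝ) *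
        ∏ i : Fin (s + 1),
          F (σ ⟨2 * (i : ℕ), by have := i.isLt; omega⟩)
            (σ ⟨2 * (i : ℕ) + 1, by have := i.isLt; omega⟩)

open Finset Function

theorem Fintype.sum_pi_fin_succ {ι β : Type*} [Fintype ι] [AddCommMonoid β] {m : ℕ}
    (f : (Fin (m + 1) → ι) → β) :
    ∑ c, f c = ∑ a, ∑ c : Fin m → ι, f (Fin.cons a c) := by
  rw [← (Fin.consEquiv fun _ => ι).sum_comp, Fintype.sum_prod_type]
  rfl

theorem Fintype.sum_eq_sum_perm_of_not_injective {α β : Type*} [Fintype α] [DecidableEq α]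
    [AddCommMonoid β] (f : (α → α) → β) (hf : ∀ c, ¬ Injective c → f c = 0) :
    ∑ c, f c = ∑ σ : Equiv.Perm α, f σ := by
  let toFun : Equiv.Perm α ↪ (α → α) := ⟨_, Equiv.coe_fn_injective⟩
  calc ∑ c, f c = ∑ c ∈ univ.map toFun, f c :=
        (Finset.sum_subset (subset_univ _) fun c _ hc => hf c fun hinj => hc <|
          mem_map.2 ⟨.ofBijective c (Finite.injective_iff_bijective.1 hinj), mem_univ _, rfl⟩).symm
    _ = ∑ σ : Equiv.Perm α, f σ := Finset.sum_map _ _ _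

section PairedProd

variable {R ι : Type*} [CommMonoid R]

def pairedProd (F : ι → ι → R) {k : ℕ} (c : Fin (2 * k) → ι) : R :=
  ∏ i : Fin k, F (c ⟨2 * i, by omega⟩) (c ⟨2 * i + 1, by omega⟩)

theorem pairedProd_cons_cons (F : ι → ι → R) {k : ℕ} (a b : ι) (c : Fin (2 * k) → ι) :
    pairedProd (k := k + 1) F (Fin.cons a (Fin.cons b c)) = F a b * pairedProd F c := by
  rw [pairedProd, Fin.prod_univ_succ]
  rfl

end PairedProd

section Expansion

variable {R A ι : Type*} [CommSemiring R] [Semiring A] [Algebra R A] [Fintype ι]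

theorem sum_sum_smul_mul_pow (F : ι → ι → R) (x : ι → A) (k : ℕ) :
    (∑ a, ∑ b, F a b • (x a * x b)) ^ k =
      ∑ c : Fin (2 * k) → ι, pairedProd F c • (List.ofFn (x ∘ c)).prod := by
  induction k with
  | zero => simp [pairedProd]
  | succ k ih =>
    rw [pow_succ', ih, sum_mul]
    show _ = ∑ c : Fin (2 * k + 1 + 1) → ι, _
    simp only [Fintype.sum_pi_fin_succ, sum_mul, mul_sum]
    refine sum_congr rfl fun a _ => ?_
    rw [sum_comm]
    refine sum_congr rfl fun b _ => sum_congr rfl fun c _ => ?_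
    rw [smul_mul_smul_comm, pairedProd_cons_cons, List.ofFn_succ, List.ofFn_succ,
      List.prod_cons, List.prod_cons, mul_assoc]
    rfl

end Expansion

section Berezin

variable {R M : Type*} [CommRing R] [AddCommGroup M] [Module R M]
  (B : ExteriorAlgebra R M →ₗ[R] R)

theorem map_ιMulti_comp_of_ne {N : ℕ} (e : Fin N → M)
    (hlow : ∀ k < N, ∀ x ∈ ⋀[R]^k M, B x = 0) {m : ℕ} (hm : m ≠ N) (c : Fin m → Fin N) :
    B (ιMulti R m (e ∘ c)) = 0 := by
  rcases hm.lt_or_gt with hlt | hgt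
  · exact hlow m hlt _ (ιMulti_range R m ⟨_, rfl⟩)
  · have hc : ¬ Injective c := fun hc =>
      (Fintype.card_le_of_injective c hc).not_gt (by simpa using hgt)
    rw [ιMulti_eq_zero_of_not_inj fun h => hc h.of_comp, map_zero]

theorem map_sum_smul_ιMulti_comp {N : ℕ} (e : Fin N → M) (w : (Fin N → Fin N) → R) :
    B (∑ c, w c • ιMulti R N (e ∘ c)) =
      (∑ σ : Equiv.Perm (Fin N), (Equiv.Perm.sign σ : ℤ) * w σ) * B (ιMulti R N e) := by
  rw [map_sum, Fintype.sum_eq_sum_perm_of_not_injective, sum_mul]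
  · refine sum_congr rfl fun σ _ => ?_
    rw [map_smul, AlternatingMap.map_perm, Units.smul_def, map_zsmul, smul_eq_mul, zsmul_eq_mul]
    ring
  · intro c hc
    rw [ιMulti_eq_zero_of_not_inj fun h => hc h.of_comp, smul_zero, map_zero]

theorem quadratic_pow_eq_sum_ιMulti {κ : Type*} [Fintype κ] (e : κ → M) (F : κ → κ → R)
    (k : ℕ) :
    (∑ a, ∑ b, F a b • (ι R (e a) * ι R (e b))) ^ k =
      ∑ c : Fin (2 * k) → κ, pairedProd F c • ιMulti R (2 * k) (e ∘ c) :=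
  sum_sum_smul_mul_pow F _ k

theorem map_quadratic_pow_of_ne {N : ℕ} (e : Fin N → M)
    (hlow : ∀ k < N, ∀ x ∈ ⋀[R]^k M, B x = 0) (F : Fin N → Fin N → R) {k : ℕ} (hk : 2 * k ≠ N) :
    B ((∑ a, ∑ b, F a b • (ι R (e a) * ι R (e b))) ^ k) = 0 := by
  rw [quadratic_pow_eq_sum_ιMulti, map_sum]
  exact sum_eq_zero fun c _ => by rw [map_smul, map_ιMulti_comp_of_ne B e hlow hk, smul_zero]

theorem map_quadratic_pow_half {k : ℕ} (e : Fin (2 * k) → M)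
    (F : Fin (2 * k) → Fin (2 * k) → R) :
    B ((∑ a, ∑ b, F a b • (ι R (e a) * ι R (e b))) ^ k) =
      (∑ σ : Equiv.Perm (Fin (2 * k)), (Equiv.Perm.sign σ : ℤ) * pairedProd F σ) *
        B (ιMulti R (2 * k) e) := by
  rw [quadratic_pow_eq_sum_ιMulti, map_sum_smul_ιMulti_comp]

end Berezin

theorem stmt_12_general (s : ℕ)
    (Binteg : ExteriorAlgebra ℝ (Fin (2 * s + 2) → ℝ) →ₗ[ℝ] ℝ)
    (ρ : Fin (2 * s + 2) → ExteriorAlgebra ℝ (Fin (2 * s + 2) → ℝ))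
    (hρ : ∀ i, ρ i = ExteriorAlgebra.ι ℝ (Pi.basisFun ℝ (Fin (2 * s + 2)) i))
    (hlow : ∀ k < 2 * s + 2, ∀ x ∈ (LinearMap.range
        (ExteriorAlgebra.ι ℝ :
          (Fin (2 * s + 2) → ℝ) →ₗ[ℝ] ExteriorAlgebra ℝ (Fin (2 * s + 2) → ℝ)) ^ k :
        Submodule ℝ (ExteriorAlgebra ℝ (Fin (2 * s + 2) → ℝ))), Binteg x = 0)
    (htop : Binteg (List.ofFn ρ).prod = 1)
    (F : Matrix (Fin (2 * s + 2)) (Fin (2 * s + 2)) ℝ) :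
    Binteg (∑ k ∈ Finset.range (2 * s + 3),
        ((Nat.factorial k : ℝ))⁻¹ •
          ((1 / 2 : ℝ) • ∑ a : Fin (2 * s + 2), ∑ b : Fin (2 * s + 2),
              F a b • (ρ a * ρ b)) ^ k)
      = pfaffian s F := by
  obtain rfl : ρ = fun i => ι ℝ (Pi.basisFun ℝ _ i) := funext hρ
  simp only [map_sum, map_smul, smul_pow]
  rw [sum_eq_single_of_mem (s + 1) (mem_range.2 (by omega)) fun k _ hk => by
    rw [map_quadratic_pow_of_ne Binteg _ hlow F (by omega), smul_zero, smul_zero]]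
  rw [← ιMulti_apply] at htop
  -- `erw`: the lemma is stated over `Fin (2 * (s + 1))`, which is only defeq to `Fin (2 * s + 2)`
  erw [map_quadratic_pow_half Binteg (k := s + 1), htop]
  rw [mul_one, smul_eq_mul, smul_eq_mul, ← mul_assoc, pfaffian]
  congr 1
  rw [one_div_pow, one_div, one_div, mul_inv, mul_comm]

/-- for a skew-symmetric matrix `F`, the Berezin integral of
`exp(½⟨ρ, Fρ⟩)` in the Grassmann algebra `Λ(ℝ^{2s+2})` equals the Pfaffian
of `F`.  (`exp` is the finite sum `Σ_k q^k/k!` of the nilpotent element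
`q = ½ Σ_{a,b} ρ_a F_{ab} ρ_b`.) -/
theorem stmt_12 (s : ℕ)
    (Binteg : ExteriorAlgebra ℝ (Fin (2 * s + 2) → ℝ) →ₗ[ℝ] ℝ)
    (ρ : Fin (2 * s + 2) → ExteriorAlgebra ℝ (Fin (2 * s + 2) → ℝ))
    (hρ : ∀ i, ρ i = ExteriorAlgebra.ι ℝ (Pi.basisFun ℝ (Fin (2 * s + 2)) i))
    (hlow : ∀ k < 2 * s + 2, ∀ x ∈ (LinearMap.range
        (ExteriorAlgebra.ι ℝ :
          (Fin (2 * s + 2) → ℝ) →ₗ[ℝ] ExteriorAlgebra ℝ (Fin (2 * s + 2) → ℝ)) ^ k :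
        Submodule ℝ (ExteriorAlgebra ℝ (Fin (2 * s + 2) → ℝ))), Binteg x = 0)
    (htop : Binteg (List.ofFn ρ).prod = 1)
    (F : Matrix (Fin (2 * s + 2)) (Fin (2 * s + 2)) ℝ)
    (hF : F.transpose = -F) :
    Binteg (∑ k ∈ Finset.range (2 * s + 3),
        ((Nat.factorial k : ℝ))⁻¹ •
          ((1 / 2 : ℝ) • ∑ a : Fin (2 * s + 2), ∑ b : Fin (2 * s + 2),
              F a b • (ρ a * ρ b)) ^ k)
      = pfaffian s F :=
  stmt_12_general s Binteg ρ hρ hlow htop F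
end

section
/- Let π₁ : E → F and π₂ : F → M be smooth oriented fiber bundles with compact oriented fibers, and let π = π₂ ∘ π₁ : E → M be the composite bundle, oriented by the product orientation of the composite fiber. Then fiber integration is functorial: π_* α = (π₂)_* ((π₁)_* α) for every differential form α on E. -/
theorem eq_of_forall_map_mul_eq {R G : Type*} [NonUnitalNonAssocRing R] [AddCommGroup G]
    (int : R →+ G) (hnd : ∀ x : R, (∀ η, int (x * η) = 0) → x = 0) {x y : R}
    (h : ∀ η, int (x * η) = int (y * η)) : x = y :=
  sub_eq_zero.mp <| hnd _ fun η => by rw [sub_mul, map_sub, h, sub_self]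

/-- functoriality (Fubini) of fiber integration.  Let
`π₁ : E → F` and `π₂ : F → M` be oriented fiber bundles with compact oriented
fibers and `π = π₂ ∘ π₁ : E → M` the composite bundle with the product
orientation of the composite fiber.  Fiber integration is characterized by the
duality `∫_M (π_*ω) ∧ η = ∫_E ω ∧ π^*η` (and similarly for `π₁, π₂`), the
pairing on `M` being nondegenerate, and pullback is functorial:
`π^* = π₁^* ∘ π₂^*`.  Then `π_* = (π₂)_* ∘ (π₁)_*`. -/
theorem stmt_17 {ΩE ΩF ΩM : Type*} [Ring ΩE] [Ring ΩF] [Ring ΩM]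
    (pb1 : ΩF →+* ΩE)   -- π₁^*
    (pb2 : ΩM →+* ΩF)   -- π₂^*
    (pb : ΩM →+* ΩE)    -- π^*
    (P1 : ΩE →+ ΩF) (P2 : ΩF →+ ΩM) (P : ΩE →+ ΩM)
    (intE : ΩE →+ ℝ) (intF : ΩF →+ ℝ) (intM : ΩM →+ ℝ)
    (hpb : ∀ x, pb x = pb1 (pb2 x))
    (hdual1 : ∀ ω η, intF (P1 ω * η) = intE (ω * pb1 η))
    (hdual2 : ∀ σ τ, intM (P2 σ * τ) = intF (σ * pb2 τ))
    (hdualP : ∀ ω τ, intM (P ω * τ) = intE (ω * pb τ))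
    (hnd : ∀ x : ΩM, (∀ η, intM (x * η) = 0) → x = 0) :
    ∀ α : ΩE, P α = P2 (P1 α) := by
  intro α
  refine eq_of_forall_map_mul_eq intM hnd fun η => ?_
  calc intM (P α * η)
      = intE (α * pb η) := hdualP α η
    _ = intE (α * pb1 (pb2 η)) := by rw [hpb]
    _ = intF (P1 α * pb2 η) := (hdual1 α (pb2 η)).symm
    _ = intM (P2 (P1 α) * η) := (hdual2 (P1 α) η).symm
end
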